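/- Let φ : ℝ² → ℝ³ be an injective linear map, ℓ : ℝ² → ℝ a nonzero linear form, u ∈ ℝ² with ℓ(u) = 1, and w ∈ ker ℓ with w ≠ 0, such that ⟨φ(u), φ(w)⟩ = 0. Set t = φ(u)/‖φ(u)‖ and n = (φ(u) × φ(w))/(‖φ(u)‖·‖φ(w)‖). Let η ≥ 0, set r = √(η + ‖φ(u)‖²), and let θ ∈ ℝ be arbitrary. Define L : ℝ² → ℝ³ by L(v) = φ(v) − ℓ(v)·φ(u) + ℓ(v)·r·(cos θ · t + sin θ · n). Then L is isometric for the bilinear form μ(v,v') = ⟨φ(v), φ(v')⟩ + η·ℓ(v)·ℓ(v'), i.e. ⟨L(v), L(v')⟩ = μ(v,v') for all v, v' ∈ ℝ², and in particular L is injective. -/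

import Mathlib

/-! Write `v = k + ℓ(v) u` with `k ∈ ker ℓ = ℝ w`. Then `L v = φ k + ℓ(v) r e`, where
`e = cos θ t + sin θ n` is a unit vector orthogonal to `φ w`, and `φ v = φ k + ℓ(v) φ u` with
`φ u ⟂ φ w`. So `⟨L v, L v'⟩` and `⟨φ v, φ v'⟩` both equal `⟨φ k, φ k'⟩` plus `ℓ(v) ℓ(v')` times
`r²` resp. `‖φ u‖²`, and `r² - ‖φ u‖² = η`. Injectivity follows from `‖φ v‖ ≤ ‖L v‖`. -/

open scoped RealInnerProductSpace

noncomputable section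

abbrev E2 := EuclideanSpace ℝ (Fin 2)
abbrev E3 := EuclideanSpace ℝ (Fin 3)

/-- The cross product of two vectors of Euclidean `ℝ³`. -/
noncomputable def cross (a b : E3) : E3 :=
  (WithLp.equiv 2 (Fin 3 → ℝ)).symm
    ![a 1 * b 2 - a 2 * b 1, a 2 * b 0 - a 0 * b 2, a 0 * b 1 - a 1 * b 0]

open Module Matrix

lemma toLp_crossProduct (a b : E3) : WithLp.toLp 2 (a.ofLp ⨯₃ b.ofLp) = cross a b := rfl

lemma inner_self_cross (a b : E3) : ⟪a, cross a b⟫ = 0 := by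
  rw [EuclideanSpace.inner_eq_star_dotProduct, ← toLp_crossProduct, star_trivial,
    dotProduct_comm, dot_self_cross]

lemma inner_cross_self (a b : E3) : ⟪b, cross a b⟫ = 0 := by
  rw [EuclideanSpace.inner_eq_star_dotProduct, ← toLp_crossProduct, star_trivial,
    dotProduct_comm, dot_cross_self]

lemma norm_cross_of_inner_eq_zero {a b : E3} (h : ⟪a, b⟫ = 0) : ‖cross a b‖ = ‖a‖ * ‖b‖ := by
  have key : ⟪cross a b, cross a b⟫ = ⟪a, a⟫ * ⟪b, b⟫ - ⟪a, b⟫ * ⟪b, a⟫ := by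
    simp only [EuclideanSpace.inner_eq_star_dotProduct, ← toLp_crossProduct, star_trivial,
      cross_dot_cross]
    ring
  rw [h, zero_mul, sub_zero] at key
  simp only [real_inner_self_eq_norm_sq] at key
  rw [← sq_eq_sq₀ (norm_nonneg _) (by positivity), key, mul_pow]

lemma ker_eq_span_singleton_of_finrank_eq_two {K V : Type*} [Field K] [AddCommGroup V]
    [Module K V] (hV : finrank K V = 2) {f : Dual K V} (hf : f ≠ 0) {w : V}
    (hw : w ∈ LinearMap.ker f) (hw0 : w ≠ 0) : LinearMap.ker f = K ∙ w := by
  have : FiniteDimensional K V := .of_finrank_pos (by omega)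
  refine (Submodule.eq_of_le_of_finrank_le ((Submodule.span_singleton_le_iff_mem _ _).2 hw)
    ?_).symm
  have := Dual.finrank_ker_add_one_of_ne_zero hf
  rw [finrank_span_singleton hw0]
  omega

section InnerProductSpace

variable {F : Type*} [NormedAddCommGroup F] [InnerProductSpace ℝ F]

lemma norm_cos_smul_add_sin_smul {t n : F} (ht : ‖t‖ = 1) (hn : ‖n‖ = 1) (htn : ⟪t, n⟫ = 0)
    (θ : ℝ) : ‖Real.cos θ • t + Real.sin θ • n‖ = 1 := by
  rw [← pow_eq_one_iff_of_nonneg (norm_nonneg _) two_ne_zero, ← real_inner_self_eq_norm_sq]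
  simp only [inner_add_left, inner_add_right, real_inner_smul_left, real_inner_smul_right,
    real_inner_self_eq_norm_sq t, real_inner_self_eq_norm_sq n, ht, hn, htn, real_inner_comm t n]
  linear_combination Real.cos_sq_add_sin_sq θ

lemma inner_add_smul_add_smul {x x' z : F} (hx : ⟪x, z⟫ = 0) (hx' : ⟪x', z⟫ = 0) (a a' : ℝ) :
    ⟪x + a • z, x' + a' • z⟫ = ⟪x, x'⟫ + ‖z‖ ^ 2 * (a * a') := by
  simp only [inner_add_left, inner_add_right, real_inner_smul_left, real_inner_smul_right,
    real_inner_self_eq_norm_sq, hx, hx', real_inner_comm x' z]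
  ring

lemma LinearMap.injective_of_norm_sq_le {V : Type*} [AddCommGroup V] [Module ℝ V]
    {φ ψ : V →ₗ[ℝ] F} (hφ : Function.Injective φ) (h : ∀ v, ‖φ v‖ ^ 2 ≤ ‖ψ v‖ ^ 2) :
    Function.Injective ψ := by
  refine (injective_iff_map_eq_zero ψ).2 fun v hv => (injective_iff_map_eq_zero φ).1 hφ v ?_
  simpa [hv] using h v

end InnerProductSpace

section UpdateAlong

variable {V F : Type*} [AddCommGroup V] [Module ℝ V] [NormedAddCommGroup F] [InnerProductSpace ℝ F]

lemma inner_map_eq_zero_of_mem_span_singleton {φ : V →ₗ[ℝ] F} {w : V} {x : F}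
    (h : ⟪φ w, x⟫ = 0) : ∀ k ∈ ℝ ∙ w, ⟪φ k, x⟫ = 0 := by
  rintro k hk
  obtain ⟨c, rfl⟩ := Submodule.mem_span_singleton.1 hk
  rw [map_smul, real_inner_smul_left, h, mul_zero]

/-- The linear map that agrees with `φ` on `ker ℓ` and sends `u` to `z`, when `ℓ u = 1`. -/
def updateAlong (φ : V →ₗ[ℝ] F) (ℓ : V →ₗ[ℝ] ℝ) (u : V) (z : F) : V →ₗ[ℝ] F :=
  φ - ℓ.smulRight (φ u) + ℓ.smulRight z

lemma updateAlong_apply (φ : V →ₗ[ℝ] F) (ℓ : V →ₗ[ℝ] ℝ) (u : V) (z : F) (v : V) :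
    updateAlong φ ℓ u z v = φ (v - ℓ v • u) + ℓ v • z := by
  simp [updateAlong]

lemma inner_updateAlong {φ : V →ₗ[ℝ] F} {ℓ : V →ₗ[ℝ] ℝ} {u : V} {z : F} (hu : ℓ u = 1)
    (hφu : ∀ k ∈ LinearMap.ker ℓ, ⟪φ k, φ u⟫ = 0) (hz : ∀ k ∈ LinearMap.ker ℓ, ⟪φ k, z⟫ = 0)
    (v v' : V) :
    ⟪updateAlong φ ℓ u z v, updateAlong φ ℓ u z v'⟫ =
      ⟪φ v, φ v'⟫ + (‖z‖ ^ 2 - ‖φ u‖ ^ 2) * (ℓ v * ℓ v') := by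
  have hker (v : V) : v - ℓ v • u ∈ LinearMap.ker ℓ := by simp [hu]
  have hφ (v : V) : φ v = φ (v - ℓ v • u) + ℓ v • φ u := by simp
  rw [updateAlong_apply, updateAlong_apply, inner_add_smul_add_smul (hz _ (hker v))
    (hz _ (hker v')), hφ v, hφ v', inner_add_smul_add_smul (hφu _ (hker v)) (hφu _ (hker v'))]
  ring

end UpdateAlong

theorem stmt4 (φ : E2 →ₗ[ℝ] E3) (hφ : Function.Injective φ)
    (ℓ : E2 →ₗ[ℝ] ℝ) (hℓ : ℓ ≠ 0)
    (u : E2) (hu : ℓ u = 1)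
    (w : E2) (hw : ℓ w = 0) (hw0 : w ≠ 0)
    (horth : ⟪φ u, φ w⟫ = 0)
    (t n : E3)
    (ht : t = ‖φ u‖⁻¹ • φ u)
    (hn : n = (‖φ u‖ * ‖φ w‖)⁻¹ • cross (φ u) (φ w))
    (η : ℝ) (hη : 0 ≤ η)
    (r : ℝ) (hr : r = Real.sqrt (η + ‖φ u‖ ^ 2))
    (θ : ℝ)
    (L : E2 → E3)
    (hL : ∀ v : E2,
      L v = φ v - ℓ v • φ u + ℓ v • (r • (Real.cos θ • t + Real.sin θ • n))) :
    (∀ v v' : E2, ⟪L v, L v'⟫ = ⟪φ v, φ v'⟫ + η * (ℓ v * ℓ v')) ∧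
      Function.Injective L := by
  set z := r • (Real.cos θ • t + Real.sin θ • n)
  have hLz : L = updateAlong φ ℓ u z := funext fun v => by simp [hL, updateAlong]
  have hφu : φ u ≠ 0 := (map_ne_zero_iff φ hφ).2 (ne_of_apply_ne ℓ (by simp [hu]))
  have hφw : φ w ≠ 0 := (map_ne_zero_iff φ hφ).2 hw0
  have ht1 : ‖t‖ = 1 := ht ▸ norm_smul_inv_norm hφu
  have hn1 : ‖n‖ = 1 := by
    rw [hn, norm_smul, norm_cross_of_inner_eq_zero horth, norm_inv, norm_mul, norm_norm,
      norm_norm, inv_mul_cancel₀ (by positivity)]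
  have htn : ⟪t, n⟫ = 0 := by
    rw [ht, hn, real_inner_smul_left, real_inner_smul_right, inner_self_cross, mul_zero, mul_zero]
  have hwt : ⟪φ w, t⟫ = 0 := by rw [ht, real_inner_smul_right, real_inner_comm, horth, mul_zero]
  have hwn : ⟪φ w, n⟫ = 0 := by rw [hn, real_inner_smul_right, inner_cross_self, mul_zero]
  have hwz : ⟪φ w, z⟫ = 0 := by
    simp only [z, real_inner_smul_right, inner_add_right, hwt, hwn, mul_zero, add_zero]
  have hz : ‖z‖ ^ 2 = η + ‖φ u‖ ^ 2 := by
    rw [norm_smul, norm_cos_smul_add_sin_smul ht1 hn1 htn, mul_one, Real.norm_eq_abs, sq_abs, hr,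
      Real.sq_sqrt (by positivity)]
  have hker := ker_eq_span_singleton_of_finrank_eq_two finrank_euclideanSpace_fin hℓ hw hw0
  have hwu : ⟪φ w, φ u⟫ = 0 := by rw [real_inner_comm, horth]
  have hiso (v v' : E2) : ⟪L v, L v'⟫ = ⟪φ v, φ v'⟫ + η * (ℓ v * ℓ v') := by
    rw [hLz, inner_updateAlong hu (hker ▸ inner_map_eq_zero_of_mem_span_singleton hwu)
      (hker ▸ inner_map_eq_zero_of_mem_span_singleton hwz), hz, add_sub_cancel_right]
  refine ⟨hiso, hLz ▸ LinearMap.injective_of_norm_sq_le hφ fun v => ?_⟩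
  rw [← hLz, ← real_inner_self_eq_norm_sq, ← real_inner_self_eq_norm_sq, hiso]
  exact le_add_of_nonneg_right (mul_nonneg hη (mul_self_nonneg _))
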